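/- arXiv:2402.04076 — 3 statements merged into one kernel-verified Lean document; each statement's English description precedes it below -/
import Mathlib

section
/- Let n ≥ 1 be an integer and let c₁, c₂, c₃, c₄ be positive reals. Then there exist positive constants c₅, c₆ depending only on n, c₁, c₂, c₃, c₄ (and not on s) with the following property: for every s ∈ (0,2) and every measurable H : ℝⁿ × ℝⁿ × (0,∞) → ℝ satisfying c₁ t^{−n/2} e^{−|x−y|²/(c₂ t)} ≤ H(x,y,t) ≤ c₃ t^{−n/2} e^{−|x−y|²/(c₄ t)} for all x, y ∈ ℝⁿ and t > 0, the kernel K_s(x,y) := (s/2)/Γ(1−s/2) · ∫₀^∞ H(x,y,t) t^{−1−s/2} dt satisfies c₅ · α_{n,s}/|x−y|^{n+s} ≤ K_s(x,y) ≤ c₆ · α_{n,s}/|x−y|^{n+s} for all x ≠ y in ℝⁿ. -/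
open MeasureTheory Real Set

/-! Integrating the two Gaussian bounds against `t ^ (-1 - s / 2)` reduces everything to the
Gaussian case. There the substitution `t ↦ t⁻¹` turns the integral into a Gamma integral, and the
normalisation `(s / 2) / Γ(1 - s / 2)` makes it exactly
`(π c) ^ (n / 2) * (c / 4) ^ (s / 2) * α_{n,s} / |x - y| ^ (n + s)`. Since `s / 2 ∈ (0, 1)`, the
factor `(c / 4) ^ (s / 2)` lies between `min 1 (c / 4)` and `max 1 (c / 4)`, uniformly in `s`. -/

/-- `α_{n,s} = s 2^{s-1} Γ((n+s)/2) / (π^{n/2} Γ(1-s/2))`. -/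
noncomputable def alphaConst (n : ℕ) (s : ℝ) : ℝ :=
  s * 2 ^ (s - 1) * Real.Gamma (((n : ℝ) + s) / 2) /
    (Real.pi ^ ((n : ℝ) / 2) * Real.Gamma (1 - s / 2))

section GammaIntegral

variable {p a : ℝ}

lemma gammaIntegrand_comp_inv {t : ℝ} (ht : 0 < t) :
    (|(-1 : ℝ)| * t ^ ((-1 : ℝ) - 1)) • ((t ^ (-1 : ℝ)) ^ (p - 1) * exp (-(a * t ^ (-1 : ℝ))))
      = exp (-(a / t)) * t ^ (-p - 1) := by
  rw [← rpow_mul ht.le, rpow_neg_one, ← div_eq_mul_inv, smul_eq_mul, abs_neg, abs_one, one_mul,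
    ← mul_assoc, ← rpow_add ht, mul_comm]
  congr 2
  ring

lemma integrableOn_exp_neg_div_mul_rpow_Ioi (hp : 0 < p) (ha : 0 < a) :
    IntegrableOn (fun t ↦ exp (-(a / t)) * t ^ (-p - 1)) (Ioi 0) := by
  have h := integrableOn_rpow_mul_exp_neg_mul_rpow (s := p - 1) (p := 1) (by linarith) one_pos ha
  simp only [rpow_one, neg_mul] at h
  exact ((integrableOn_Ioi_comp_rpow_iff _ (p := -1) (by norm_num)).2 h).congr_fun
    (fun t ht ↦ gammaIntegrand_comp_inv ht) measurableSet_Ioi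

lemma integral_exp_neg_div_mul_rpow_Ioi (hp : 0 < p) (ha : 0 < a) :
    ∫ t in Ioi 0, exp (-(a / t)) * t ^ (-p - 1) = Gamma p / a ^ p := by
  rw [← setIntegral_congr_fun measurableSet_Ioi (fun t ht ↦ gammaIntegrand_comp_inv ht),
    integral_comp_rpow_Ioi (fun y ↦ y ^ (p - 1) * exp (-(a * y))) (by norm_num),
    integral_rpow_mul_exp_neg_mul_Ioi hp ha, one_div, inv_rpow ha.le, inv_mul_eq_div]

end GammaIntegral

section GaussianMoment

variable {d s c k R : ℝ}

lemma gaussian_mul_rpow_eq {t : ℝ} (ht : 0 < t) :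
    k * t ^ (-d / 2) * exp (-R ^ 2 / (c * t)) * t ^ (-1 - s / 2)
      = k * (exp (-(R ^ 2 / c / t)) * t ^ (-((d + s) / 2) - 1)) := by
  rw [show -((d + s) / 2) - 1 = -d / 2 + (-1 - s / 2) by ring, rpow_add ht, div_div,
    ← neg_div]
  ring

lemma integrableOn_gaussian_mul_rpow_Ioi (hds : 0 < d + s) (hc : 0 < c) (hR : R ≠ 0) :
    IntegrableOn (fun t ↦ k * t ^ (-d / 2) * exp (-R ^ 2 / (c * t)) * t ^ (-1 - s / 2))
      (Ioi 0) :=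
  IntegrableOn.congr_fun
    ((integrableOn_exp_neg_div_mul_rpow_Ioi (by linarith) (by positivity)).const_mul k)
    (fun _ ht ↦ (gaussian_mul_rpow_eq ht).symm) measurableSet_Ioi

lemma integral_gaussian_mul_rpow_Ioi (hds : 0 < d + s) (hc : 0 < c) (hR : 0 < R) :
    ∫ t in Ioi 0, k * t ^ (-d / 2) * exp (-R ^ 2 / (c * t)) * t ^ (-1 - s / 2)
      = k * Gamma ((d + s) / 2) * c ^ ((d + s) / 2) / R ^ (d + s) := by
  rw [setIntegral_congr_fun measurableSet_Ioi (fun _ ht ↦ gaussian_mul_rpow_eq ht),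
    integral_const_mul, integral_exp_neg_div_mul_rpow_Ioi (by linarith) (by positivity),
    div_rpow (by positivity) hc.le, ← rpow_natCast, ← rpow_mul hR.le]
  push_cast
  rw [show 2 * ((d + s) / 2) = d + s by ring]
  field_simp

end GaussianMoment

lemma alphaConst_eq (n : ℕ) (s : ℝ) :
    alphaConst n s = (s / 2) / Gamma (1 - s / 2) * Gamma ((n + s) / 2) * 4 ^ (s / 2) /
      π ^ ((n : ℝ) / 2) := by
  rw [alphaConst, rpow_sub two_pos, rpow_one, show (4 : ℝ) = 2 ^ (2 : ℝ) by norm_num,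
    ← rpow_mul zero_le_two]
  ring_nf

lemma fractional_transform_gaussian (n : ℕ) {s c k R : ℝ} (hs : 0 < s) (hc : 0 < c)
    (hR : 0 < R) :
    (s / 2) / Gamma (1 - s / 2) *
        ∫ t in Ioi 0, k * t ^ (-(n : ℝ) / 2) * exp (-R ^ 2 / (c * t)) * t ^ (-1 - s / 2)
      = k * (π * c) ^ ((n : ℝ) / 2) * (c / 4) ^ (s / 2) *
          (alphaConst n s / R ^ ((n : ℝ) + s)) := by
  rw [integral_gaussian_mul_rpow_Ioi (by positivity) hc hR, alphaConst_eq,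
    mul_rpow pi_pos.le hc.le, div_rpow hc.le zero_le_four, add_div, rpow_add hc]
  field_simp

lemma min_one_le_rpow {b u : ℝ} (hb : 0 < b) (hu₀ : 0 ≤ u) (hu₁ : u ≤ 1) : min 1 b ≤ b ^ u := by
  rcases le_total b 1 with h | h
  · have := rpow_le_rpow_of_exponent_ge hb h hu₁
    rw [rpow_one] at this
    exact (min_le_right _ _).trans this
  · exact (min_le_left _ _).trans (one_le_rpow h hu₀)

lemma rpow_le_max_one {b u : ℝ} (hb : 0 < b) (hu₀ : 0 ≤ u) (hu₁ : u ≤ 1) : b ^ u ≤ max 1 b := by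
  rcases le_total b 1 with h | h
  · exact (rpow_le_one hb.le h hu₀).trans (le_max_left _ _)
  · have := rpow_le_rpow_of_exponent_le h hu₁
    rw [rpow_one] at this
    exact this.trans (le_max_right _ _)

lemma setIntegral_mono_on_sandwich {α : Type*} [MeasurableSpace α] {μ : Measure α} {S : Set α}
    {f g h : α → ℝ} (hS : MeasurableSet S) (hf : AEStronglyMeasurable f (μ.restrict S))
    (hg : IntegrableOn g S μ) (hh : IntegrableOn h S μ) (hgf : ∀ x ∈ S, g x ≤ f x)
    (hfh : ∀ x ∈ S, f x ≤ h x) :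
    ∫ x in S, g x ∂μ ≤ ∫ x in S, f x ∂μ ∧ ∫ x in S, f x ∂μ ≤ ∫ x in S, h x ∂μ := by
  have hfi : IntegrableOn f S μ := integrable_of_le_of_le hf
    ((ae_restrict_iff' hS).2 (ae_of_all _ hgf)) ((ae_restrict_iff' hS).2 (ae_of_all _ hfh)) hg hh
  exact ⟨setIntegral_mono_on hg hfi hS hgf, setIntegral_mono_on hfi hh hS hfh⟩

theorem kernel_comparability_general (n : ℕ) (c₁ c₂ c₃ c₄ : ℝ)
    (hc₁ : 0 < c₁) (hc₂ : 0 < c₂) (hc₃ : 0 < c₃) (hc₄ : 0 < c₄) :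
    ∃ c₅ c₆ : ℝ, 0 < c₅ ∧ 0 < c₆ ∧
      ∀ s : ℝ, s ∈ Ioo (0:ℝ) 2 →
      ∀ H : EuclideanSpace ℝ (Fin n) → EuclideanSpace ℝ (Fin n) → ℝ → ℝ,
        Measurable (fun p : EuclideanSpace ℝ (Fin n) × EuclideanSpace ℝ (Fin n) × ℝ =>
          H p.1 p.2.1 p.2.2) →
        (∀ (x y : EuclideanSpace ℝ (Fin n)) (t : ℝ), 0 < t →
          c₁ * t ^ (-(n : ℝ) / 2) * Real.exp (-‖x - y‖ ^ 2 / (c₂ * t)) ≤ H x y t ∧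
            H x y t ≤ c₃ * t ^ (-(n : ℝ) / 2) * Real.exp (-‖x - y‖ ^ 2 / (c₄ * t))) →
        ∀ x y : EuclideanSpace ℝ (Fin n), x ≠ y →
          c₅ * (alphaConst n s / ‖x - y‖ ^ ((n : ℝ) + s)) ≤
              (s / 2) / Real.Gamma (1 - s / 2) *
                ∫ t in Ioi (0:ℝ), H x y t * t ^ (-1 - s / 2) ∧
            (s / 2) / Real.Gamma (1 - s / 2) *
                ∫ t in Ioi (0:ℝ), H x y t * t ^ (-1 - s / 2) ≤
              c₆ * (alphaConst n s / ‖x - y‖ ^ ((n : ℝ) + s)) := by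
  refine ⟨c₁ * (π * c₂) ^ ((n : ℝ) / 2) * min 1 (c₂ / 4),
    c₃ * (π * c₄) ^ ((n : ℝ) / 2) * max 1 (c₄ / 4), by positivity, by positivity, ?_⟩
  rintro s ⟨hs₀, hs₂⟩ H hH hHbounds x y hxy
  have hR : 0 < ‖x - y‖ := norm_pos_iff.2 (sub_ne_zero.2 hxy)
  have hHxy : Measurable (H x y) :=
    hH.comp (measurable_const.prodMk (measurable_const.prodMk measurable_id))
  obtain ⟨hlower, hupper⟩ := setIntegral_mono_on_sandwich measurableSet_Ioi
    (f := fun t ↦ H x y t * t ^ (-1 - s / 2))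
    (hHxy.mul (by fun_prop)).aestronglyMeasurable
    (integrableOn_gaussian_mul_rpow_Ioi (by positivity) hc₂ hR.ne')
    (integrableOn_gaussian_mul_rpow_Ioi (by positivity) hc₄ hR.ne')
    (fun t ht ↦ mul_le_mul_of_nonneg_right (hHbounds x y t ht).1 (rpow_nonneg ht.le _))
    (fun t ht ↦ mul_le_mul_of_nonneg_right (hHbounds x y t ht).2 (rpow_nonneg ht.le _))
  have hΓ : 0 < Gamma (1 - s / 2) := Gamma_pos_of_pos (by linarith)
  have hα : 0 ≤ alphaConst n s / ‖x - y‖ ^ ((n : ℝ) + s) := by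
    rw [alphaConst]; positivity
  constructor
  · calc _ ≤ c₁ * (π * c₂) ^ ((n : ℝ) / 2) * (c₂ / 4) ^ (s / 2) *
            (alphaConst n s / ‖x - y‖ ^ ((n : ℝ) + s)) := by
          gcongr; exact min_one_le_rpow (by positivity) (by positivity) (by linarith)
      _ = _ := (fractional_transform_gaussian n hs₀ hc₂ hR).symm
      _ ≤ _ := by gcongr
  · calc _ ≤ _ := by gcongr
      _ = c₃ * (π * c₄) ^ ((n : ℝ) / 2) * (c₄ / 4) ^ (s / 2) *
            (alphaConst n s / ‖x - y‖ ^ ((n : ℝ) + s)) :=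
          fractional_transform_gaussian n hs₀ hc₄ hR
      _ ≤ _ := by
          gcongr; exact rpow_le_max_one (by positivity) (by positivity) (by linarith)

/-- Two-sided Gaussian bounds for a heat kernel imply two-sided bounds, comparable to the
Euclidean fractional kernel, for the associated fractional singular kernel; the comparison
constants depend only on `n, c₁, c₂, c₃, c₄` and not on `s`. -/
theorem kernel_comparability (n : ℕ) (hn : 1 ≤ n) (c₁ c₂ c₃ c₄ : ℝ)
    (hc₁ : 0 < c₁) (hc₂ : 0 < c₂) (hc₃ : 0 < c₃) (hc₄ : 0 < c₄) :
    ∃ c₅ c₆ : ℝ, 0 < c₅ ∧ 0 < c₆ ∧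
      ∀ s : ℝ, s ∈ Ioo (0:ℝ) 2 →
      ∀ H : EuclideanSpace ℝ (Fin n) → EuclideanSpace ℝ (Fin n) → ℝ → ℝ,
        Measurable (fun p : EuclideanSpace ℝ (Fin n) × EuclideanSpace ℝ (Fin n) × ℝ =>
          H p.1 p.2.1 p.2.2) →
        (∀ (x y : EuclideanSpace ℝ (Fin n)) (t : ℝ), 0 < t →
          c₁ * t ^ (-(n : ℝ) / 2) * Real.exp (-‖x - y‖ ^ 2 / (c₂ * t)) ≤ H x y t ∧
            H x y t ≤ c₃ * t ^ (-(n : ℝ) / 2) * Real.exp (-‖x - y‖ ^ 2 / (c₄ * t))) →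
        ∀ x y : EuclideanSpace ℝ (Fin n), x ≠ y →
          c₅ * (alphaConst n s / ‖x - y‖ ^ ((n : ℝ) + s)) ≤
              (s / 2) / Real.Gamma (1 - s / 2) *
                ∫ t in Ioi (0:ℝ), H x y t * t ^ (-1 - s / 2) ∧
            (s / 2) / Real.Gamma (1 - s / 2) *
                ∫ t in Ioi (0:ℝ), H x y t * t ^ (-1 - s / 2) ≤
              c₆ * (alphaConst n s / ‖x - y‖ ^ ((n : ℝ) + s)) :=
  kernel_comparability_general n c₁ c₂ c₃ c₄ hc₁ hc₂ hc₃ hc₄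
end

section
/- Let s ∈ (0,2) and define G(z,t) := z^s · e^{−z²/(4t)} / (2^s Γ(s/2) t^{1+s/2}) for z > 0, t > 0. Then G satisfies the partial differential equation −∂_t G(z,t) + ((1−s)/z) ∂_z G(z,t) + ∂_{zz} G(z,t) = 0 at every point (z,t) ∈ (0,∞) × (0,∞). -/
open Real Set

/-! The PDE is linear, so the normalising constant `2 ^ s Γ(s/2)` plays no role and it suffices to
treat `K(z,t) = z ^ s e^{-z²/(4t)} / t ^ (1 + s/2)`. Its logarithmic derivatives are
`∂_t K / K = z²/(4t²) - (1 + s/2)/t` and `∂_z K / K = s/z - z/(2t) =: P`, and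
`∂_{zz} K / K = P² - s/z² - 1/(2t)`; substituting, the `1/z²`, `1/t` and `z²/t²` terms cancel. -/

noncomputable def subordinationProfile (s z t : ℝ) : ℝ :=
  z ^ s * exp (-z ^ 2 / (4 * t)) / t ^ (1 + s / 2)

theorem hasDerivAt_subordinationProfile_time (s z : ℝ) {t : ℝ} (ht : 0 < t) :
    HasDerivAt (fun τ => subordinationProfile s z τ)
      (subordinationProfile s z t * (z ^ 2 / (4 * t ^ 2) - (1 + s / 2) / t)) t := by
  have hexponent : HasDerivAt (fun τ : ℝ => -z ^ 2 / (4 * τ)) (z ^ 2 / (4 * t ^ 2)) t := by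
    refine ((hasDerivAt_const t (-z ^ 2)).div ((hasDerivAt_id' t).const_mul 4)
      (by positivity)).congr_deriv ?_
    field_simp
    ring
  have hpow : HasDerivAt (fun τ : ℝ => τ ^ (1 + s / 2)) ((1 + s / 2) * t ^ (1 + s / 2 - 1)) t :=
    hasDerivAt_rpow_const (Or.inl ht.ne')
  have htpow : t ^ (1 + s / 2) ≠ 0 := (rpow_pos_of_pos ht _).ne'
  unfold subordinationProfile
  refine ((hexponent.exp.const_mul (z ^ s)).div hpow htpow).congr_deriv ?_
  rw [rpow_sub_one ht.ne']
  field_simp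

theorem hasDerivAt_subordinationProfile_space (s t : ℝ) {z : ℝ} (hz : 0 < z) :
    HasDerivAt (fun ζ => subordinationProfile s ζ t)
      (subordinationProfile s z t * (s / z - z / (2 * t))) z := by
  have hexponent : HasDerivAt (fun ζ : ℝ => -ζ ^ 2 / (4 * t)) (-(2 * z) / (4 * t)) z := by
    simpa using ((hasDerivAt_pow 2 z).neg).div_const (4 * t)
  have hpow : HasDerivAt (fun ζ : ℝ => ζ ^ s) (s * z ^ (s - 1)) z :=
    hasDerivAt_rpow_const (Or.inl hz.ne')
  unfold subordinationProfile
  refine ((hpow.mul hexponent.exp).div_const (t ^ (1 + s / 2))).congr_deriv ?_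
  rw [rpow_sub_one hz.ne']
  field_simp
  ring

theorem hasDerivAt_deriv_subordinationProfile_space (s : ℝ) {z t : ℝ} (hz : 0 < z) :
    HasDerivAt (deriv fun ζ => subordinationProfile s ζ t)
      (subordinationProfile s z t * ((s / z - z / (2 * t)) ^ 2 - s / z ^ 2 - 1 / (2 * t))) z := by
  have hderiv : (deriv fun ζ => subordinationProfile s ζ t) =ᶠ[nhds z]
      fun ζ => subordinationProfile s ζ t * (s / ζ - ζ / (2 * t)) := by
    filter_upwards [eventually_gt_nhds hz] with ζ hζ
    exact (hasDerivAt_subordinationProfile_space s t hζ).deriv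
  have hlogDeriv : HasDerivAt (fun ζ : ℝ => s / ζ - ζ / (2 * t)) (-s / z ^ 2 - 1 / (2 * t)) z := by
    refine (((hasDerivAt_inv hz.ne').const_mul s).sub
      ((hasDerivAt_id' z).div_const (2 * t))).congr_deriv ?_
    ring
  refine (((hasDerivAt_subordinationProfile_space s t hz).mul hlogDeriv).congr_of_eventuallyEq
    hderiv).congr_deriv ?_
  ring

theorem subordinationProfile_pde (s : ℝ) {z t : ℝ} (hz : 0 < z) (ht : 0 < t) :
    -(deriv (fun τ => subordinationProfile s z τ) t) +
        ((1 - s) / z) * deriv (fun ζ => subordinationProfile s ζ t) z +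
      deriv (fun ζ => deriv (fun ζ' => subordinationProfile s ζ' t) ζ) z = 0 := by
  rw [(hasDerivAt_subordinationProfile_time s z ht).deriv,
    (hasDerivAt_subordinationProfile_space s t hz).deriv,
    (hasDerivAt_deriv_subordinationProfile_space s hz).deriv]
  field_simp
  ring

theorem subordination_kernel_pde_general (s : ℝ)
    (G : ℝ → ℝ → ℝ)
    (hG : ∀ z t : ℝ, G z t =
      z ^ s * Real.exp (-z ^ 2 / (4 * t)) / (2 ^ s * Real.Gamma (s / 2) * t ^ (1 + s / 2))) :
    ∀ z t : ℝ, 0 < z → 0 < t →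
      -(deriv (fun τ : ℝ => G z τ) t) + ((1 - s) / z) * deriv (fun ζ : ℝ => G ζ t) z +
        deriv (fun ζ : ℝ => deriv (fun ζ' : ℝ => G ζ' t) ζ) z = 0 := by
  intro z t hz ht
  set c := (2 ^ s * Real.Gamma (s / 2))⁻¹
  have hGc : G = fun z t => c * subordinationProfile s z t := by
    ext z t
    rw [hG, subordinationProfile]
    ring
  subst hGc
  simp only [deriv_const_mul_field']
  linear_combination c * subordinationProfile_pde s hz ht

/-- The subordination kernel `G(z,t) = z^s e^{-z²/(4t)} / (2^s Γ(s/2) t^{1+s/2})` satisfies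
`-∂_t G + ((1-s)/z) ∂_z G + ∂_{zz} G = 0` for all `z > 0`, `t > 0`. -/
theorem subordination_kernel_pde (s : ℝ) (hs : s ∈ Ioo (0:ℝ) 2)
    (G : ℝ → ℝ → ℝ)
    (hG : ∀ z t : ℝ, G z t =
      z ^ s * Real.exp (-z ^ 2 / (4 * t)) / (2 ^ s * Real.Gamma (s / 2) * t ^ (1 + s / 2))) :
    ∀ z t : ℝ, 0 < z → 0 < t →
      -(deriv (fun τ : ℝ => G z τ) t) + ((1 - s) / z) * deriv (fun ζ : ℝ => G ζ t) z +
        deriv (fun ζ : ℝ => deriv (fun ζ' : ℝ => G ζ' t) ζ) z = 0 :=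
  subordination_kernel_pde_general s G hG
end

section
/- Let n ≥ 1 be an integer and s ∈ (0,2). Let X : ℝⁿ → ℝⁿ be a smooth compactly supported vector field and let ψ : ℝ × ℝⁿ → ℝⁿ be smooth with ψ(0,x) = x, ψ(t+t',x) = ψ(t, ψ(t',x)) and ∂_t ψ(t,x) = X(ψ(t,x)) for all t, t' ∈ ℝ and x ∈ ℝⁿ. Then for every T > 0 there exists a constant C, depending only on n, s, T and X, such that for all t ∈ [0,T] and all x ≠ y in ℝⁿ one has ψ(t,x) ≠ ψ(t,y), |ψ(t,x) − ψ(t,y)|^{−(n+s)} ≤ C |x−y|^{−(n+s)}, and |∂_t ( |ψ(t,x) − ψ(t,y)|^{−(n+s)} )| ≤ C |x−y|^{−(n+s)}. -/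
open MeasureTheory Real Set

/-- Euclidean-kernel instance of Propositions 4.3/4.4: along the flow `ψ` of a smooth
compactly supported vector field, the kernel `|ψ(t,x) - ψ(t,y)|^{-(n+s)}` stays comparable
to `|x-y|^{-(n+s)}`, and its time derivative is controlled pointwise by `|x-y|^{-(n+s)}`,
uniformly for `t ∈ [0,T]`. -/
theorem kernel_along_flow_bounds (n : ℕ) (hn : 1 ≤ n) (s : ℝ) (hs : s ∈ Ioo (0:ℝ) 2)
    (X : EuclideanSpace ℝ (Fin n) → EuclideanSpace ℝ (Fin n))
    (hX : ContDiff ℝ (⊤ : ℕ∞) X) (hXc : HasCompactSupport X)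
    (ψ : ℝ → EuclideanSpace ℝ (Fin n) → EuclideanSpace ℝ (Fin n))
    (hψsmooth : ContDiff ℝ (⊤ : ℕ∞) (fun q : ℝ × EuclideanSpace ℝ (Fin n) => ψ q.1 q.2))
    (hψ0 : ∀ x, ψ 0 x = x)
    (hψadd : ∀ t t' x, ψ (t + t') x = ψ t (ψ t' x))
    (hψflow : ∀ t x, HasDerivAt (fun τ : ℝ => ψ τ x) (X (ψ t x)) t) :
    ∀ T : ℝ, 0 < T → ∃ C : ℝ, 0 < C ∧
      ∀ t ∈ Icc (0:ℝ) T, ∀ x y : EuclideanSpace ℝ (Fin n), x ≠ y →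
        ψ t x ≠ ψ t y ∧
        ‖ψ t x - ψ t y‖ ^ (-((n : ℝ) + s)) ≤ C * ‖x - y‖ ^ (-((n : ℝ) + s)) ∧
        |deriv (fun τ : ℝ => ‖ψ τ x - ψ τ y‖ ^ (-((n : ℝ) + s))) t| ≤
          C * ‖x - y‖ ^ (-((n : ℝ) + s)) := by
  classical
  obtain ⟨K, hK⟩ := ContDiff.lipschitzWith_of_hasCompactSupport hXc hX (by simp)
  set L : ℝ := (K : ℝ) with hLdef
  have hL : 0 ≤ L := K.coe_nonneg
  set p : ℝ := -((n : ℝ) + s) with hp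
  have hns : (0:ℝ) < (n : ℝ) + s := by
    have : (0:ℝ) < s := hs.1
    positivity
  have hpneg : p < 0 := by rw [hp]; exact neg_neg_of_pos hns
  intro T hT
  -- Grönwall contraction estimate, for a general flow of a K-Lipschitz field.
  have key : ∀ (Φ : ℝ → EuclideanSpace ℝ (Fin n) → EuclideanSpace ℝ (Fin n))
      (V : EuclideanSpace ℝ (Fin n) → EuclideanSpace ℝ (Fin n)), LipschitzWith K V →
      (∀ τ x, HasDerivAt (fun τ : ℝ => Φ τ x) (V (Φ τ x)) τ) →
      ∀ t : ℝ, 0 ≤ t → ∀ x y, ‖Φ t x - Φ t y‖ ≤ Real.exp (L * t) * ‖Φ 0 x - Φ 0 y‖ := by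
    intro Φ V hV hflow t ht x y
    set f : ℝ → EuclideanSpace ℝ (Fin n) := fun τ => Φ τ x - Φ τ y with hf
    set f' : ℝ → EuclideanSpace ℝ (Fin n) := fun τ => V (Φ τ x) - V (Φ τ y) with hf'
    have hd : ∀ τ, HasDerivAt f (f' τ) τ := fun τ => (hflow τ x).sub (hflow τ y)
    have := norm_le_gronwallBound_of_norm_deriv_right_le
      (f := f) (f' := f') (δ := ‖f 0‖) (K := L) (ε := 0) (a := 0) (b := t)
      (fun τ _ => (hd τ).continuousAt.continuousWithinAt)
      (fun τ _ => (hd τ).hasDerivWithinAt) le_rfl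
      (fun τ _ => by
        have h1 := hV.dist_le_mul (Φ τ x) (Φ τ y)
        rw [dist_eq_norm, dist_eq_norm] at h1
        simpa [hf, hf'] using h1)
      t ⟨ht, le_rfl⟩
    rw [gronwallBound_ε0, sub_zero] at this
    simpa [hf, mul_comm] using this
  -- Forward estimate.
  have hup : ∀ t : ℝ, 0 ≤ t → ∀ x y : EuclideanSpace ℝ (Fin n),
      ‖ψ t x - ψ t y‖ ≤ Real.exp (L * t) * ‖x - y‖ := by
    intro t ht x y
    have := key ψ X hK hψflow t ht x y
    simpa [hψ0] using this
  -- Backward flow and lower estimate.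
  have hVneg : LipschitzWith K (fun v => -(X v)) := by
    intro a b
    calc edist (-(X a)) (-(X b)) = edist (X a) (X b) := edist_neg_neg _ _
      _ ≤ K * edist a b := hK a b
  have hback : ∀ τ (x : EuclideanSpace ℝ (Fin n)),
      HasDerivAt (fun τ : ℝ => ψ (-τ) x) (-(X (ψ (-τ) x))) τ := by
    intro τ x
    have h1 := (hψflow (-τ) x).scomp τ (hasDerivAt_neg τ)
    rw [neg_one_smul] at h1
    exact h1
  have hlow : ∀ t : ℝ, 0 ≤ t → ∀ x y : EuclideanSpace ℝ (Fin n),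
      ‖x - y‖ ≤ Real.exp (L * t) * ‖ψ t x - ψ t y‖ := by
    intro t ht x y
    have := key (fun τ x => ψ (-τ) x) (fun v => -(X v)) hVneg hback t ht (ψ t x) (ψ t y)
    have e1 : ψ (-t) (ψ t x) = x := by rw [← hψadd]; simp [hψ0]
    have e2 : ψ (-t) (ψ t y) = y := by rw [← hψadd]; simp [hψ0]
    simpa [e1, e2, hψ0] using this
  -- The constant.
  refine ⟨(1 + ((n : ℝ) + s) * L) * Real.exp (L * ((n : ℝ) + s) * T), by positivity, ?_⟩
  intro t ht x y hxy
  set E : ℝ := Real.exp (L * ((n : ℝ) + s) * T) with hE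
  have hxy' : (0:ℝ) < ‖x - y‖ := by
    rw [norm_pos_iff, sub_ne_zero]; exact hxy
  have hne : ψ t x ≠ ψ t y := by
    intro h
    have h0 := hlow t ht.1 x y
    rw [h, sub_self, norm_zero, mul_zero] at h0
    exact absurd h0 (not_le.2 hxy')
  have hupos : (0:ℝ) < ‖ψ t x - ψ t y‖ := by
    rw [norm_pos_iff, sub_ne_zero]; exact hne
  -- `exp (-L t) * ‖x - y‖ ≤ ‖ψ t x - ψ t y‖`
  have hlow' : Real.exp (-(L * t)) * ‖x - y‖ ≤ ‖ψ t x - ψ t y‖ := by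
    have h1 := hlow t ht.1 x y
    rw [Real.exp_neg, inv_mul_le_iff₀ (Real.exp_pos _)]
    exact h1
  have hexp_le : Real.exp (L * t * ((n : ℝ) + s)) ≤ E := by
    rw [hE]
    apply Real.exp_le_exp.2
    have h4 : L * ((n : ℝ) + s) * t ≤ L * ((n : ℝ) + s) * T :=
      mul_le_mul_of_nonneg_left ht.2 (mul_nonneg hL hns.le)
    nlinarith [h4]
  -- the main kernel estimate
  have hker : ‖ψ t x - ψ t y‖ ^ p ≤ E * ‖x - y‖ ^ p := by
    have h1 : ‖ψ t x - ψ t y‖ ^ p ≤ (Real.exp (-(L * t)) * ‖x - y‖) ^ p :=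
      Real.rpow_le_rpow_of_nonpos (by positivity) hlow' hpneg.le
    calc ‖ψ t x - ψ t y‖ ^ p ≤ (Real.exp (-(L * t)) * ‖x - y‖) ^ p := h1
      _ = Real.exp (-(L * t)) ^ p * ‖x - y‖ ^ p :=
          Real.mul_rpow (Real.exp_pos _).le (norm_nonneg _)
      _ = Real.exp (-(L * t) * p) * ‖x - y‖ ^ p := by
          rw [← Real.exp_mul]
      _ ≤ E * ‖x - y‖ ^ p := by
          apply mul_le_mul_of_nonneg_right _ (Real.rpow_nonneg (norm_nonneg _) _)
          have : -(L * t) * p = L * t * ((n : ℝ) + s) := by rw [hp]; ring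
          rw [this]; exact hexp_le
  have hEpos : (0:ℝ) < E := by rw [hE]; exact Real.exp_pos _
  have hElt : E ≤ (1 + ((n : ℝ) + s) * L) * E := by
    nlinarith [mul_nonneg (mul_nonneg hns.le hL) hEpos.le]
  refine ⟨hne, ?_, ?_⟩
  · calc ‖ψ t x - ψ t y‖ ^ p ≤ E * ‖x - y‖ ^ p := hker
      _ ≤ (1 + ((n : ℝ) + s) * L) * E * ‖x - y‖ ^ p := by
          apply mul_le_mul_of_nonneg_right hElt (Real.rpow_nonneg (norm_nonneg _) _)
  -- derivative bound
  · set u : ℝ → EuclideanSpace ℝ (Fin n) := fun τ => ψ τ x - ψ τ y with hu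
    have hud : ∀ τ, HasDerivAt u (X (ψ τ x) - X (ψ τ y)) τ :=
      fun τ => (hψflow τ x).sub (hψflow τ y)
    have hq : HasDerivAt (fun τ => ‖u τ‖ ^ 2)
        (2 * (inner ℝ (u t) (X (ψ t x) - X (ψ t y)) : ℝ)) t := (hud t).norm_sq
    have hqpos : (0:ℝ) < ‖u t‖ ^ 2 := by
      have : (0:ℝ) < ‖u t‖ := hupos
      positivity
    have hF : HasDerivAt (fun τ => (‖u τ‖ ^ 2) ^ (p / 2))
        (2 * (inner ℝ (u t) (X (ψ t x) - X (ψ t y)) : ℝ) * (p / 2) *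
          (‖u t‖ ^ 2) ^ (p / 2 - 1)) t :=
      hq.rpow_const (Or.inl hqpos.ne')
    have hfun : (fun τ => (‖u τ‖ ^ 2 : ℝ) ^ (p / 2))
        = fun τ : ℝ => ‖ψ τ x - ψ τ y‖ ^ p := by
      funext τ
      rw [← Real.rpow_natCast_mul (norm_nonneg _) 2 (p / 2),
        show ((2:ℕ) : ℝ) * (p / 2) = p by push_cast; ring]
    rw [hfun] at hF
    rw [hF.deriv]
    -- bound the derivative value
    have hXL : ‖X (ψ t x) - X (ψ t y)‖ ≤ L * ‖u t‖ := by
      have h1 := hK.dist_le_mul (ψ t x) (ψ t y)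
      rw [dist_eq_norm, dist_eq_norm] at h1
      exact h1
    have hinner : |(inner ℝ (u t) (X (ψ t x) - X (ψ t y)) : ℝ)| ≤ L * ‖u t‖ ^ 2 := by
      calc |(inner ℝ (u t) (X (ψ t x) - X (ψ t y)) : ℝ)|
          ≤ ‖u t‖ * ‖X (ψ t x) - X (ψ t y)‖ := abs_real_inner_le_norm _ _
        _ ≤ ‖u t‖ * (L * ‖u t‖) := by
            apply mul_le_mul_of_nonneg_left hXL (norm_nonneg _)
        _ = L * ‖u t‖ ^ 2 := by ring
    have hqp : (0:ℝ) < (‖u t‖ ^ 2) ^ (p / 2 - 1) := Real.rpow_pos_of_pos hqpos _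
    have habs : |2 * (inner ℝ (u t) (X (ψ t x) - X (ψ t y)) : ℝ) * (p / 2) *
        (‖u t‖ ^ 2) ^ (p / 2 - 1)|
        ≤ ((n : ℝ) + s) * L * (‖u t‖ ^ 2) ^ (p / 2) := by
      have h2 : (‖u t‖ ^ 2) ^ (p / 2) = ‖u t‖ ^ 2 * (‖u t‖ ^ 2) ^ (p / 2 - 1) := by
        nth_rewrite 1 [show p / 2 = (p / 2 - 1) + 1 by ring]
        rw [Real.rpow_add_one hqpos.ne']
        ring
      rw [abs_mul, abs_mul, abs_of_pos hqp, h2]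
      have hp2 : |p / 2| = ((n : ℝ) + s) / 2 := by
        rw [hp, abs_div, abs_neg, abs_of_pos hns]
        norm_num
      rw [hp2, abs_mul, abs_of_pos (by norm_num : (0:ℝ) < 2)]
      calc 2 * |(inner ℝ (u t) (X (ψ t x) - X (ψ t y)) : ℝ)| * (((n : ℝ) + s) / 2) *
            (‖u t‖ ^ 2) ^ (p / 2 - 1)
          ≤ 2 * (L * ‖u t‖ ^ 2) * (((n : ℝ) + s) / 2) * (‖u t‖ ^ 2) ^ (p / 2 - 1) := by
            apply mul_le_mul_of_nonneg_right _ hqp.le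
            apply mul_le_mul_of_nonneg_right _ (by positivity)
            apply mul_le_mul_of_nonneg_left hinner (by norm_num)
        _ = ((n : ℝ) + s) * L * (‖u t‖ ^ 2 * (‖u t‖ ^ 2) ^ (p / 2 - 1)) := by ring
    have hq2 : (‖u t‖ ^ 2) ^ (p / 2) = ‖u t‖ ^ p := by
      rw [← Real.rpow_natCast_mul (norm_nonneg _) 2 (p / 2),
        show ((2:ℕ) : ℝ) * (p / 2) = p by push_cast; ring]
    rw [hq2] at habs
    calc |2 * (inner ℝ (u t) (X (ψ t x) - X (ψ t y)) : ℝ) * (p / 2) *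
          (‖u t‖ ^ 2) ^ (p / 2 - 1)|
        ≤ ((n : ℝ) + s) * L * ‖u t‖ ^ p := habs
      _ ≤ ((n : ℝ) + s) * L * (E * ‖x - y‖ ^ p) := by
          apply mul_le_mul_of_nonneg_left hker (by positivity)
      _ ≤ (1 + ((n : ℝ) + s) * L) * E * ‖x - y‖ ^ p := by
          have h3 : (0:ℝ) ≤ ‖x - y‖ ^ p := Real.rpow_nonneg (norm_nonneg _) _
          nlinarith [mul_nonneg hEpos.le h3]
end
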